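/- Let m, n, s be natural numbers with 1 < m ≤ M and 0 < s < m·n, and let the entries of the random matrix U ∈ ℝ^{m×n} be i.i.d. standard Gaussian N(0,1). Let Φ̄* minimize ‖U − Φ̄‖_F over all Φ̄ ∈ ℝ^{m×n} with ‖Φ̄‖₀ ≤ s, with minimum value ε₂, and let ε₁ = inf over all F ∈ ℝ^{m×M} and R ∈ ℝ^{M×n} with supp R fixed equal to supp Φ̄* of ‖U − F·R‖_F. Then ε₁ ≤ ε₂ always holds, and ε₁ < ε₂ holds with probability at least 1 − δ, where δ = C(n, s/m)/C(m·n, s) if m divides s and δ = 0 otherwise. -/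
import Mathlib


open MeasureTheory ProbabilityTheory

/-- Number of nonzero entries of a real matrix (the ℓ₀ "norm"). -/
noncomputable def l0 {m n : ℕ} (A : Matrix (Fin m) (Fin n) ℝ) : ℕ :=
  (Finset.univ.filter fun p : Fin m × Fin n => A p.1 p.2 ≠ 0).card

/-- Frobenius norm of a real matrix. -/
noncomputable def frobNorm {m n : ℕ} (A : Matrix (Fin m) (Fin n) ℝ) : ℝ :=
  Real.sqrt (∑ i, ∑ j, (A i j) ^ 2)

/-- The random matrix built from i.i.d. coordinates. -/
def U0 (m n : ℕ) (ω : (Fin m × Fin n) → ℝ) : Matrix (Fin m) (Fin n) ℝ :=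
  Matrix.of fun i j => ω (i, j)

set_option linter.unusedSectionVars false
set_option linter.unusedVariables false
set_option maxHeartbeats 1000000

lemma frob_eq {m n : ℕ} (A : Matrix (Fin m) (Fin n) ℝ) :
    frobNorm A = Real.sqrt (∑ p : Fin m × Fin n, (A p.1 p.2)^2) := by
  rw [frobNorm, Fintype.sum_prod_type]

lemma sqsum_le_of_frob {m n : ℕ} {A B : Matrix (Fin m) (Fin n) ℝ}
    (h : frobNorm A ≤ frobNorm B) :
    ∑ p : Fin m × Fin n, (A p.1 p.2)^2 ≤ ∑ p : Fin m × Fin n, (B p.1 p.2)^2 := by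
  have hA : (0:ℝ) ≤ ∑ p : Fin m × Fin n, (A p.1 p.2)^2 :=
    Finset.sum_nonneg fun _ _ => sq_nonneg _
  rw [frob_eq, frob_eq] at h
  calc ∑ p : Fin m × Fin n, (A p.1 p.2)^2
      = Real.sqrt (∑ p : Fin m × Fin n, (A p.1 p.2)^2) ^ 2 := (Real.sq_sqrt hA).symm
    _ ≤ Real.sqrt (∑ p : Fin m × Fin n, (B p.1 p.2)^2) ^ 2 :=
        pow_le_pow_left₀ (Real.sqrt_nonneg _) h 2
    _ = _ := Real.sq_sqrt (Finset.sum_nonneg fun _ _ => sq_nonneg _)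

lemma frob_le_of_sqsum {m n : ℕ} {A B : Matrix (Fin m) (Fin n) ℝ}
    (h : ∑ p : Fin m × Fin n, (A p.1 p.2)^2 ≤ ∑ p : Fin m × Fin n, (B p.1 p.2)^2) :
    frobNorm A ≤ frobNorm B := by
  rw [frob_eq, frob_eq]; exact Real.sqrt_le_sqrt h


section Det
variable {m n s : ℕ}
variable (Φstar : ((Fin m × Fin n) → ℝ) → Matrix (Fin m) (Fin n) ℝ)
variable (hΦcard : ∀ ω, l0 (Φstar ω) ≤ s)
variable (hΦmin : ∀ ω (Φ : Matrix (Fin m) (Fin n) ℝ), l0 Φ ≤ s →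
      frobNorm (U0 m n ω - Φstar ω) ≤ frobNorm (U0 m n ω - Φ))

include hΦcard hΦmin in
/-- On its support, the minimizer agrees with `ω`. -/
lemma phi_entries (ω : (Fin m × Fin n) → ℝ) (i : Fin m) (j : Fin n)
    (hne : Φstar ω i j ≠ 0) : Φstar ω i j = ω (i, j) := by
  classical
  by_contra hne2
  set Φ' : Matrix (Fin m) (Fin n) ℝ :=
    Matrix.of (fun a b => if a = i ∧ b = j then ω (i, j) else Φstar ω a b) with hΦ'
  have hl0 : l0 Φ' ≤ s := by
    refine le_trans (Finset.card_le_card ?_) (hΦcard ω)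
    intro p hp
    simp only [Finset.mem_filter, Finset.mem_univ, true_and] at hp ⊢
    by_cases hpij : p.1 = i ∧ p.2 = j
    · rcases hpij with ⟨h1, h2⟩; rw [h1, h2]; exact hne
    · simpa [hΦ', Matrix.of_apply, hpij] using hp
  have hfrob := hΦmin ω Φ' hl0
  have hsq := sqsum_le_of_frob hfrob
  have hlt : ∑ p : Fin m × Fin n, ((U0 m n ω - Φ') p.1 p.2)^2 <
      ∑ p : Fin m × Fin n, ((U0 m n ω - Φstar ω) p.1 p.2)^2 := by
    refine Finset.sum_lt_sum (fun p _ => ?_) ⟨(i, j), Finset.mem_univ _, ?_⟩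
    · by_cases hpij : p.1 = i ∧ p.2 = j
      · rcases hpij with ⟨h1, h2⟩
        simp only [Matrix.sub_apply, hΦ', Matrix.of_apply, h1, h2, and_self, if_true, U0]
        rw [sub_self, zero_pow two_ne_zero]
        positivity
      · simp [hΦ', Matrix.sub_apply, Matrix.of_apply, hpij]
    · simp only [Matrix.sub_apply, hΦ', Matrix.of_apply, U0, and_self, if_true]
      rw [sub_self, zero_pow two_ne_zero]
      have h3 : ω (i, j) - Φstar ω i j ≠ 0 := fun h => hne2 (by linarith [sub_eq_zero.mp h])
      exact pow_two_pos_of_ne_zero h3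
  linarith

/-- Support of the minimizer, as a finset. -/
noncomputable def suppS (ω : (Fin m × Fin n) → ℝ) : Finset (Fin m × Fin n) :=
  Finset.univ.filter fun p => Φstar ω p.1 p.2 ≠ 0

include hΦcard hΦmin in
/-- The support of the minimizer maximizes energy among all sets of size ≤ s. -/
lemma energy_max (ω : (Fin m × Fin n) → ℝ) (T : Finset (Fin m × Fin n)) (hT : T.card ≤ s) :
    ∑ p ∈ T, ω p ^ 2 ≤ ∑ p ∈ suppS Φstar ω, ω p ^ 2 := by
  classical
  set Φ'' : Matrix (Fin m) (Fin n) ℝ :=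
    Matrix.of (fun a b => if (a, b) ∈ T then ω (a, b) else 0) with hΦ''
  have hl0 : l0 Φ'' ≤ s := by
    refine le_trans (le_trans (Finset.card_le_card ?_) le_rfl) hT
    intro p hp
    simp only [Finset.mem_filter, Finset.mem_univ, true_and, hΦ'', Matrix.of_apply] at hp
    by_cases hmem : (p.1, p.2) ∈ T
    · simpa using hmem
    · simp [hmem] at hp
  have hsq := sqsum_le_of_frob (hΦmin ω Φ'' hl0)
  have h1 : ∑ p : Fin m × Fin n, ((U0 m n ω - Φstar ω) p.1 p.2)^2
      = ∑ p : Fin m × Fin n, ω p ^ 2 - ∑ p ∈ suppS Φstar ω, ω p ^ 2 := by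
    have : ∀ p : Fin m × Fin n, ((U0 m n ω - Φstar ω) p.1 p.2)^2
        = ω p ^ 2 - (if p ∈ suppS Φstar ω then ω p ^ 2 else 0) := by
      intro p
      by_cases hp : p ∈ suppS Φstar ω
      · have hne : Φstar ω p.1 p.2 ≠ 0 := by
          simpa [suppS] using hp
        have := phi_entries Φstar hΦcard hΦmin ω p.1 p.2 hne
        simp [Matrix.sub_apply, U0, this, hp]
      · have hz : Φstar ω p.1 p.2 = 0 := by
          by_contra h; exact hp (by simp [suppS, h])
        simp [Matrix.sub_apply, U0, hz, hp]
    rw [Finset.sum_congr rfl fun p _ => this p, Finset.sum_sub_distrib,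
      Finset.sum_ite_mem, Finset.univ_inter]
  have h2 : ∑ p : Fin m × Fin n, ((U0 m n ω - Φ'') p.1 p.2)^2
      = ∑ p : Fin m × Fin n, ω p ^ 2 - ∑ p ∈ T, ω p ^ 2 := by
    have : ∀ p : Fin m × Fin n, ((U0 m n ω - Φ'') p.1 p.2)^2
        = ω p ^ 2 - (if p ∈ T then ω p ^ 2 else 0) := by
      intro p
      by_cases hp : p ∈ T
      · simp [Matrix.sub_apply, U0, hΦ'', hp]
      · simp [Matrix.sub_apply, U0, hΦ'', hp]
    rw [Finset.sum_congr rfl fun p _ => this p, Finset.sum_sub_distrib,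
      Finset.sum_ite_mem, Finset.univ_inter]
  rw [h1, h2] at hsq
  linarith
end Det


section Det2
variable {m n M s : ℕ}
variable (Φstar : ((Fin m × Fin n) → ℝ) → Matrix (Fin m) (Fin n) ℝ)

/-- The set whose infimum is ε₁. -/
def ESet (M : ℕ) (Φstar : ((Fin m × Fin n) → ℝ) → Matrix (Fin m) (Fin n) ℝ)
    (ω : (Fin m × Fin n) → ℝ) : Set ℝ :=
  {e : ℝ | ∃ (F : Matrix (Fin m) (Fin M) ℝ) (R : Matrix (Fin M) (Fin n) ℝ),
      (∀ (i : Fin M) (j : Fin n), R i j ≠ 0 →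
        ∃ hi : (i : ℕ) < m, Φstar ω ⟨(i : ℕ), hi⟩ j ≠ 0) ∧
      e = frobNorm (U0 m n ω - F * R)}

lemma ESet_bdd (ω : (Fin m × Fin n) → ℝ) : BddBelow (ESet M Φstar ω) := by
  refine ⟨0, fun e he => ?_⟩
  obtain ⟨F, R, -, rfl⟩ := he
  rw [frobNorm]; exact Real.sqrt_nonneg _

lemma mem_ESet (hmM : m ≤ M) (ω : (Fin m × Fin n) → ℝ) (i0 k0 : Fin m) (t : ℝ) :
    frobNorm (U0 m n ω - Matrix.of (fun a b =>
      Φstar ω a b + t * (if a = i0 then Φstar ω k0 b else 0))) ∈ ESet M Φstar ω := by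
  classical
  set R : Matrix (Fin M) (Fin n) ℝ :=
    Matrix.of (fun c b => if hc : (c : ℕ) < m then Φstar ω ⟨(c : ℕ), hc⟩ b else 0) with hR
  set F : Matrix (Fin m) (Fin M) ℝ :=
    Matrix.of (fun a c => (if (c : ℕ) = (a : ℕ) then (1:ℝ) else 0)
      + (if a = i0 ∧ (c : ℕ) = (k0 : ℕ) then t else 0)) with hF
  have hsupp : ∀ (i : Fin M) (j : Fin n), R i j ≠ 0 →
      ∃ hi : (i : ℕ) < m, Φstar ω ⟨(i : ℕ), hi⟩ j ≠ 0 := by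
    intro i j hne
    by_cases hc : (i : ℕ) < m
    · exact ⟨hc, by simpa [hR, Matrix.of_apply, hc] using hne⟩
    · exact absurd (by simp [hR, Matrix.of_apply, hc]) hne
  have hFR : F * R = Matrix.of (fun a b =>
      Φstar ω a b + t * (if a = i0 then Φstar ω k0 b else 0)) := by
    ext a b
    rw [Matrix.mul_apply]
    have hsplit : ∀ c : Fin M, F a c * R c b
        = (if (c : ℕ) = (a : ℕ) then (1:ℝ) else 0) * R c b
          + (if a = i0 ∧ (c : ℕ) = (k0 : ℕ) then t else 0) * R c b := by
      intro c; rw [hF]; simp only [Matrix.of_apply]; ring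
    rw [Finset.sum_congr rfl fun c _ => hsplit c, Finset.sum_add_distrib]
    have h1 : ∑ c : Fin M, (if (c : ℕ) = (a : ℕ) then (1:ℝ) else 0) * R c b
        = Φstar ω a b := by
      rw [Finset.sum_eq_single (Fin.castLE hmM a)]
      · simp [hR, Matrix.of_apply, a.isLt, Fin.eta]
      · intro c _ hc
        have : ¬ ((c : ℕ) = (a : ℕ)) := fun h => hc (Fin.ext (by simpa using h))
        simp [this]
      · intro h; exact absurd (Finset.mem_univ _) h
    have h2 : ∑ c : Fin M, (if a = i0 ∧ (c : ℕ) = (k0 : ℕ) then t else 0) * R c b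
        = t * (if a = i0 then Φstar ω k0 b else 0) := by
      by_cases ha : a = i0
      · rw [Finset.sum_eq_single (Fin.castLE hmM k0)]
        · simp [hR, Matrix.of_apply, k0.isLt, Fin.eta, ha]
        · intro c _ hc
          have : ¬ ((c : ℕ) = (k0 : ℕ)) := fun h => hc (Fin.ext (by simpa using h))
          simp [this]
        · intro h; exact absurd (Finset.mem_univ _) h
      · simp [ha]
    rw [h1, h2, Matrix.of_apply]
  exact ⟨F, R, hsupp, by rw [hFR]⟩

lemma eps1_le (hmM : m ≤ M) (hm : 0 < m) (ω : (Fin m × Fin n) → ℝ) :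
    sInf (ESet M Φstar ω) ≤ frobNorm (U0 m n ω - Φstar ω) := by
  have h := mem_ESet Φstar hmM ω ⟨0, hm⟩ ⟨0, hm⟩ 0
  have heq : Matrix.of (fun a b =>
      Φstar ω a b + (0:ℝ) * (if a = (⟨0, hm⟩ : Fin m) then Φstar ω ⟨0, hm⟩ b else 0))
      = Φstar ω := by
    ext a b; simp
  rw [heq] at h
  exact csInf_le (ESet_bdd Φstar ω) h

lemma key_sum {s : ℕ} (hmM : m ≤ M)
    (hΦcard : ∀ ω, l0 (Φstar ω) ≤ s)
    (hΦmin : ∀ ω (Φ : Matrix (Fin m) (Fin n) ℝ), l0 Φ ≤ s →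
      frobNorm (U0 m n ω - Φstar ω) ≤ frobNorm (U0 m n ω - Φ))
    (ω : (Fin m × Fin n) → ℝ)
    (hni : ¬ sInf (ESet M Φstar ω) < frobNorm (U0 m n ω - Φstar ω)) (i0 k0 : Fin m) :
    ∑ j ∈ Finset.univ.filter (fun j => Φstar ω k0 j ≠ 0 ∧ Φstar ω i0 j = 0),
      ω (i0, j) * ω (k0, j) = 0 := by
  classical
  push_neg at hni
  set D : Fin m × Fin n → ℝ := fun p => if p.1 = i0 then Φstar ω k0 p.2 else 0 with hD
  set A := ∑ p : Fin m × Fin n, (D p)^2 with hA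
  set B := ∑ j ∈ Finset.univ.filter (fun j => Φstar ω k0 j ≠ 0 ∧ Φstar ω i0 j = 0),
      ω (i0, j) * ω (k0, j) with hB
  have hcross : ∑ p : Fin m × Fin n, (U0 m n ω - Φstar ω) p.1 p.2 * D p = B := by
    rw [Fintype.sum_prod_type]
    rw [Finset.sum_eq_single i0]
    · rw [hB, Finset.sum_filter]
      refine Finset.sum_congr rfl fun j _ => ?_
      by_cases hk : Φstar ω k0 j ≠ 0
      · by_cases hi : Φstar ω i0 j = 0
        · have hkj := phi_entries Φstar hΦcard hΦmin ω k0 j hk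
          have hk' : ω (k0, j) ≠ 0 := by rw [← hkj]; exact hk
          simp [hD, Matrix.sub_apply, U0, hi, hkj, hk']
        · have hij := phi_entries Φstar hΦcard hΦmin ω i0 j (by exact hi)
          have hi' : ω (i0, j) ≠ 0 := by rw [← hij]; exact hi
          simp [hD, Matrix.sub_apply, U0, hij, hi']
      · push_neg at hk
        simp [hD, hk]
    · intro i _ hi
      refine Finset.sum_eq_zero fun j _ => ?_
      simp [hD, hi]
    · intro h; exact absurd (Finset.mem_univ _) h
  have hmain : ∀ t : ℝ, t^2 * A - 2 * t * B ≥ 0 := by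
    intro t
    have hclaim := mem_ESet Φstar hmM ω i0 k0 t
    have hle : frobNorm (U0 m n ω - Φstar ω) ≤ frobNorm (U0 m n ω - Matrix.of (fun a b =>
        Φstar ω a b + t * (if a = i0 then Φstar ω k0 b else 0))) :=
      le_trans hni (csInf_le (ESet_bdd Φstar ω) hclaim)
    have hsq := sqsum_le_of_frob hle
    have hexp : ∑ p : Fin m × Fin n, ((U0 m n ω - Matrix.of (fun a b =>
        Φstar ω a b + t * (if a = i0 then Φstar ω k0 b else 0))) p.1 p.2)^2
        = ∑ p : Fin m × Fin n, ((U0 m n ω - Φstar ω) p.1 p.2)^2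
          - 2 * t * (∑ p : Fin m × Fin n, (U0 m n ω - Φstar ω) p.1 p.2 * D p)
          + t^2 * A := by
      rw [hA, Finset.mul_sum, Finset.mul_sum, ← Finset.sum_sub_distrib,
        ← Finset.sum_add_distrib]
      refine Finset.sum_congr rfl fun p _ => ?_
      simp only [Matrix.sub_apply, Matrix.of_apply, U0, hD]
      ring
    rw [hexp, hcross] at hsq
    linarith
  have hA0 : 0 ≤ A := Finset.sum_nonneg fun _ _ => sq_nonneg _
  by_contra hBne
  have hA1 : (0:ℝ) < A + 1 := by linarith
  set u := B / (A + 1) with hu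
  have hBu : B = u * (A + 1) := by rw [hu]; field_simp
  have hu0 : u ≠ 0 := by
    intro h; rw [h, zero_mul] at hBu; exact hBne hBu
  have ht := hmain u
  rw [hBu] at ht
  nlinarith [mul_pos (pow_two_pos_of_ne_zero hu0) (show (0:ℝ) < A + 2 by linarith)]
end Det2


lemma gauss_null_singleton (c : ℝ) : gaussianReal 0 1 {c} = 0 := by
  have habs : gaussianReal 0 1 ≪ (volume : Measure ℝ) :=
    gaussianReal_absolutelyContinuous 0 one_ne_zero
  exact habs (measure_singleton c)

variable {ι : Type*} [Fintype ι]

noncomputable def piGauss (ι : Type*) [Fintype ι] : Measure (ι → ℝ) :=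
  Measure.pi fun _ : ι => gaussianReal 0 1

instance : IsProbabilityMeasure (piGauss ι) := by
  unfold piGauss; infer_instance

lemma coord_null (a : ι) (c : ℝ) : piGauss ι {ω | ω a = c} = 0 := by
  have : {ω : ι → ℝ | ω a = c} = Function.eval a ⁻¹' ({c} : Set ℝ) := rfl
  rw [this]
  exact Measure.pi_eval_preimage_null _ (gauss_null_singleton c)

/-- If `h` depends only on coordinates other than `a`, then `{ω | ω a = h ω}` is null. -/
lemma pi_null_eq (a : ι) (h : (ι → ℝ) → ℝ) (hh : Measurable h)
    (hdep : ∀ ω ω' : ι → ℝ, (∀ z, z ≠ a → ω z = ω' z) → h ω = h ω') :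
    piGauss ι {ω | ω a = h ω} = 0 := by
  classical
  set μ := fun _ : ι => (gaussianReal 0 1 : Measure ℝ) with hμ
  have hmp := measurePreserving_piEquivPiSubtypeProd μ (fun z : ι => z ≠ a)
  set e := MeasurableEquiv.piEquivPiSubtypeProd (fun _ : ι => ℝ) (fun z : ι => z ≠ a) with he
  have hSm : MeasurableSet {ω : ι → ℝ | ω a = h ω} :=
    measurableSet_eq_fun (measurable_pi_apply a) hh
  set T : Set ((∀ _ : {z : ι // z ≠ a}, ℝ) × (∀ _ : {z : ι // ¬ z ≠ a}, ℝ)) :=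
    e.symm ⁻¹' {ω : ι → ℝ | ω a = h ω} with hT
  have hTm : MeasurableSet T := e.symm.measurable hSm
  have hpre : {ω : ι → ℝ | ω a = h ω} = e ⁻¹' T := by
    rw [hT, ← Set.preimage_comp]
    simp
  have hkey : piGauss ι {ω : ι → ℝ | ω a = h ω}
      = ((Measure.pi fun _ : {z : ι // z ≠ a} => gaussianReal 0 1).prod
        (Measure.pi fun _ : {z : ι // ¬ z ≠ a} => gaussianReal 0 1)) T := by
    rw [hpre]
    exact hmp.measure_preimage hTm.nullMeasurableSet
  rw [hkey, Measure.prod_apply hTm]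
  have hslice : ∀ x : (∀ _ : {z : ι // z ≠ a}, ℝ),
      (Measure.pi fun _ : {z : ι // ¬ z ≠ a} => gaussianReal 0 1) (Prod.mk x ⁻¹' T) = 0 := by
    intro x
    have ha' : ¬ (a ≠ a) := not_not_intro rfl
    have hcoord : ∀ y : (∀ _ : {z : ι // ¬ z ≠ a}, ℝ), (e.symm (x, y)) a = y ⟨a, ha'⟩ := by
      intro y
      show (Equiv.piEquivPiSubtypeProd (fun z : ι => z ≠ a) (fun _ => ℝ)).symm (x, y) a = _
      rw [Equiv.piEquivPiSubtypeProd_symm_apply]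
      exact dif_neg ha'
    have hother : ∀ (y : (∀ _ : {z : ι // ¬ z ≠ a}, ℝ)) (z : ι) (hz : z ≠ a),
        (e.symm (x, y)) z = x ⟨z, hz⟩ := by
      intro y z hz
      show (Equiv.piEquivPiSubtypeProd (fun z : ι => z ≠ a) (fun _ => ℝ)).symm (x, y) z = _
      rw [Equiv.piEquivPiSubtypeProd_symm_apply]
      exact dif_pos hz
    have hval : ∀ y, h (e.symm (x, y)) = h (e.symm (x, fun _ => 0)) := by
      intro y
      refine hdep _ _ fun z hz => ?_
      rw [hother y z hz, hother _ z hz]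
    have hset : Prod.mk x ⁻¹' T
        = Function.eval (⟨a, ha'⟩ : {z : ι // ¬ z ≠ a}) ⁻¹' ({h (e.symm (x, fun _ => 0))} : Set ℝ) := by
      ext y
      simp only [hT, Set.mem_preimage, Set.mem_setOf_eq, Set.mem_singleton_iff]
      rw [hcoord y, hval y]
    rw [hset]
    exact Measure.pi_eval_preimage_null _ (gauss_null_singleton _)
  rw [lintegral_congr hslice, lintegral_zero]


section MT
variable {ι : Type*} [Fintype ι]

/-- A bilinear sum over a fixed nonempty column set vanishes only on a null set. -/
lemma Q_null {m n : ℕ} (i0 k0 : Fin m) (hik : i0 ≠ k0) (cs : Finset (Fin n)) (j0 : Fin n)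
    (hj0 : j0 ∈ cs) :
    piGauss (Fin m × Fin n) {ω | ∑ j ∈ cs, ω (i0, j) * ω (k0, j) = 0} = 0 := by
  classical
  set a : Fin m × Fin n := (i0, j0) with ha
  set b : Fin m × Fin n := (k0, j0) with hb
  have hba : b ≠ a := by simp [ha, hb, Prod.ext_iff]; intro h; exact absurd h.symm hik
  set r : ((Fin m × Fin n) → ℝ) → ℝ := fun ω => ∑ j ∈ cs.erase j0, ω (i0, j) * ω (k0, j)
    with hr
  set h : ((Fin m × Fin n) → ℝ) → ℝ := fun ω => (- r ω) * (ω b)⁻¹ with hh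
  have hrm : Measurable r := by
    rw [hr]
    exact Finset.measurable_sum _ fun j _ =>
      (measurable_pi_apply _).mul (measurable_pi_apply _)
  have hhm : Measurable h := by
    rw [hh]; exact hrm.neg.mul (measurable_pi_apply b).inv
  have hdep : ∀ ω ω' : (Fin m × Fin n) → ℝ, (∀ z, z ≠ a → ω z = ω' z) → h ω = h ω' := by
    intro ω ω' hzz
    have hrr : r ω = r ω' := by
      refine Finset.sum_congr rfl fun j hj => ?_
      have hj' : j ≠ j0 := Finset.ne_of_mem_erase hj
      rw [hzz (i0, j) (by rw [ha]; intro hc; exact hj' (Prod.ext_iff.mp hc).2),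
        hzz (k0, j) (by rw [ha]; intro hc; exact hik (Prod.ext_iff.mp hc).1.symm)]
    rw [hh]; dsimp only; rw [hrr, hzz b hba]
  have hsub : {ω : (Fin m × Fin n) → ℝ | ∑ j ∈ cs, ω (i0, j) * ω (k0, j) = 0}
      ⊆ {ω | ω b = 0} ∪ {ω | ω a = h ω} := by
    intro ω hω
    simp only [Set.mem_setOf_eq] at hω
    by_cases hB : ω b = 0
    · exact Or.inl hB
    · refine Or.inr ?_
      have hsplit : ω a * ω b + r ω = ∑ j ∈ cs, ω (i0, j) * ω (k0, j) :=
        Finset.add_sum_erase cs (fun j => ω (i0, j) * ω (k0, j)) hj0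
      have hthis : ω a * ω b = - r ω := by rw [← hsplit] at hω; linarith
      show ω a = (- r ω) * (ω b)⁻¹
      rw [eq_mul_inv_iff_mul_eq₀ hB]
      exact hthis
  exact measure_mono_null hsub
    (measure_union_null (coord_null b 0) (pi_null_eq a h hhm hdep))

lemma pair_null (p q : ι) (hpq : p ≠ q) :
    piGauss ι {ω | ω p ^ 2 = ω q ^ 2} = 0 := by
  have hsub : {ω : ι → ℝ | ω p ^ 2 = ω q ^ 2}
      ⊆ {ω | ω p = (fun ω : ι → ℝ => ω q) ω} ∪ {ω | ω p = (fun ω : ι → ℝ => - ω q) ω} := by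
    intro ω hω
    simp only [Set.mem_setOf_eq] at hω ⊢
    have : (ω p - ω q) * (ω p + ω q) = 0 := by ring_nf; linarith [hω]
    rcases mul_eq_zero.mp this with h | h
    · refine Or.inl ?_; show ω p = ω q; linarith
    · refine Or.inr ?_; show ω p = - ω q; linarith
  refine measure_mono_null hsub (measure_union_null ?_ ?_)
  · exact pi_null_eq p _ (measurable_pi_apply q)
      (fun ω ω' hz => hz q (Ne.symm hpq))
  · exact pi_null_eq p _ (measurable_pi_apply q).neg
      (fun ω ω' hz => by simp [hz q (Ne.symm hpq)])

/-- Energy of a finite set of coordinates. -/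
def En (ω : ι → ℝ) (S : Finset ι) : ℝ := ∑ p ∈ S, ω p ^ 2

/-- Event: `S` maximizes energy among sets of size ≤ s. -/
def maxE (snat : ℕ) (S : Finset ι) : Set (ι → ℝ) :=
  {ω | ∀ T : Finset ι, T.card ≤ snat → En ω T ≤ En ω S}

/-- Event: all squared coordinates are distinct. -/
def Gset (ι : Type*) : Set (ι → ℝ) := {ω | ∀ p q : ι, p ≠ q → ω p ^ 2 ≠ ω q ^ 2}

lemma En_measurable (S : Finset ι) : Measurable fun ω : ι → ℝ => En ω S :=
  Finset.measurable_sum _ fun p _ => (measurable_pi_apply p).pow_const 2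

lemma maxE_meas (snat : ℕ) (S : Finset ι) : MeasurableSet (maxE (ι := ι) snat S) := by
  classical
  have : maxE (ι := ι) snat S = ⋂ T : Finset ι,
      if T.card ≤ snat then {ω : ι → ℝ | En ω T ≤ En ω S} else Set.univ := by
    ext ω
    simp only [maxE, Set.mem_setOf_eq, Set.mem_iInter]
    constructor
    · intro hω T; split_ifs with hT
      · exact hω T hT
      · trivial
    · intro hω T hT
      have := hω T; rwa [if_pos hT] at this
  rw [this]
  refine MeasurableSet.iInter fun T => ?_
  split_ifs with hT
  · exact measurableSet_le (En_measurable T) (En_measurable S)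
  · exact MeasurableSet.univ

lemma Gset_meas : MeasurableSet (Gset ι) := by
  classical
  have : Gset ι = ⋂ p : ι, ⋂ q : ι,
      if p = q then Set.univ else {ω : ι → ℝ | ω p ^ 2 = ω q ^ 2}ᶜ := by
    ext ω
    simp only [Gset, Set.mem_setOf_eq, Set.mem_iInter]
    constructor
    · intro hω p q; split_ifs with hpq
      · trivial
      · exact hω p q hpq
    · intro hω p q hpq
      have := hω p q; rwa [if_neg hpq] at this
  rw [this]
  refine MeasurableSet.iInter fun p => MeasurableSet.iInter fun q => ?_
  split_ifs with hpq
  · exact MeasurableSet.univ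
  · exact (measurableSet_eq_fun ((measurable_pi_apply p).pow_const 2)
      ((measurable_pi_apply q).pow_const 2)).compl

lemma Gcompl_null : piGauss ι (Gset ι)ᶜ = 0 := by
  classical
  have hsub : (Gset ι)ᶜ ⊆ ⋃ p : ι, ⋃ q : ι,
      (if p = q then (∅ : Set (ι → ℝ)) else {ω | ω p ^ 2 = ω q ^ 2}) := by
    intro ω hω
    simp only [Gset, Set.mem_compl_iff, Set.mem_setOf_eq] at hω
    push_neg at hω
    obtain ⟨p, q, hpq, heq⟩ := hω
    refine Set.mem_iUnion.mpr ⟨p, Set.mem_iUnion.mpr ⟨q, ?_⟩⟩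
    rw [if_neg hpq]; exact heq
  refine measure_mono_null hsub
    (measure_iUnion_null fun p => measure_iUnion_null fun q => ?_)
  split_ifs with hpq
  · simp
  · exact pair_null p q hpq
end MT


section MT2
variable {ι : Type*} [Fintype ι]

/-- Two distinct sets of size exactly `snat` cannot both be energy maximizers for a
generic `ω`. -/
lemma maxE_disjoint {snat : ℕ} {S S' : Finset ι} (hS : S.card = snat) (hS' : S'.card = snat)
    (hne : S ≠ S') :
    Disjoint (maxE snat S ∩ Gset ι) (maxE snat S' ∩ Gset ι) := by
  classical
  rw [Set.disjoint_left]
  rintro ω ⟨h1, hG⟩ ⟨h2, -⟩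
  have hEq : En ω S = En ω S' := le_antisymm (h2 S hS.le) (h1 S' hS'.le)
  set D := S \ S' with hD
  set D' := S' \ S with hD'
  have hDne : D.Nonempty := by
    rw [Finset.nonempty_iff_ne_empty]
    intro hemp
    have hsub : S ⊆ S' := by rwa [hD, Finset.sdiff_eq_empty_iff_subset] at hemp
    exact hne (Finset.eq_of_subset_of_card_le hsub (by omega))
  have hcardD : D.card = D'.card := by
    have e1 : (S \ S').card + (S ∩ S').card = S.card := Finset.card_sdiff_add_card_inter S S'
    have e2 : (S' \ S).card + (S' ∩ S).card = S'.card := Finset.card_sdiff_add_card_inter S' S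
    rw [Finset.inter_comm] at e2
    show (S \ S').card = (S' \ S).card
    omega
  have hD'ne : D'.Nonempty := by
    rw [← Finset.card_pos, ← hcardD, Finset.card_pos]; exact hDne
  obtain ⟨b, hbD', hbmin⟩ := Finset.exists_min_image D' (fun c => ω c ^ 2) hD'ne
  by_cases hex : ∃ x ∈ D, ω b ^ 2 < ω x ^ 2
  · obtain ⟨x, hxD, hxb⟩ := hex
    have hxS' : x ∉ S' := (Finset.mem_sdiff.mp hxD).2
    have hbS' : b ∈ S' := (Finset.mem_sdiff.mp hbD').1
    set T := insert x (S'.erase b) with hT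
    have hTcard : T.card ≤ snat := by
      have hpos : 0 < S'.card := Finset.card_pos.mpr ⟨b, hbS'⟩
      rw [hT, Finset.card_insert_of_notMem (fun hx => hxS' (Finset.mem_of_mem_erase hx)),
        Finset.card_erase_of_mem hbS']
      omega
    have hcon := h2 T hTcard
    have hEnT : En ω T = ω x ^ 2 + En ω (S'.erase b) := by
      rw [hT, En, Finset.sum_insert (fun hx => hxS' (Finset.mem_of_mem_erase hx))]; rfl
    have hEnS' : En ω S' = ω b ^ 2 + En ω (S'.erase b) := by
      rw [En, ← Finset.add_sum_erase _ _ hbS']; rfl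
    rw [hEnT, hEnS'] at hcon
    linarith
  · push_neg at hex
    have hlt : ∀ x ∈ D, ω x ^ 2 < ω b ^ 2 := by
      intro x hxD
      have hxb : x ≠ b := by
        intro h
        exact (Finset.mem_sdiff.mp hxD).2 (h ▸ (Finset.mem_sdiff.mp hbD').1)
      exact lt_of_le_of_ne (hex x hxD) (hG x b hxb)
    have hsum : En ω D < En ω D' := by
      calc En ω D < ∑ _x ∈ D, ω b ^ 2 := Finset.sum_lt_sum_of_nonempty hDne hlt
        _ = D.card • (ω b ^ 2) := by rw [Finset.sum_const]
        _ = D'.card • (ω b ^ 2) := by rw [hcardD]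
        _ ≤ ∑ c ∈ D', ω c ^ 2 := Finset.card_nsmul_le_sum D' _ _ hbmin
        _ = En ω D' := rfl
    have hS1 : En ω (S ∩ S') + En ω D = En ω S := by
      rw [En, En, En, Finset.sum_inter_add_sum_sdiff]
    have hS2 : En ω (S ∩ S') + En ω D' = En ω S' := by
      rw [En, En, En, Finset.inter_comm, Finset.sum_inter_add_sum_sdiff]
    linarith
  
/-- Measure invariance of the generic maximizer events under permutations of coordinates. -/
lemma maxE_perm (snat : ℕ) (S S' : Finset ι) (σ : Equiv.Perm ι)
    (hσ : ∀ x, σ x ∈ S ↔ x ∈ S') :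
    piGauss ι (maxE snat S' ∩ Gset ι) = piGauss ι (maxE snat S ∩ Gset ι) := by
  classical
  set me := MeasurableEquiv.piCongrLeft (fun _ : ι => ℝ) σ with hme
  have hmp : MeasurePreserving me (piGauss ι) (piGauss ι) :=
    measurePreserving_piCongrLeft (fun _ : ι => gaussianReal 0 1) σ
  have hmp2 : MeasurePreserving me.symm (piGauss ι) (piGauss ι) := hmp.symm me
  have happ : ∀ (ω : ι → ℝ) (i : ι), me.symm ω i = ω (σ i) := by
    intro ω i
    rw [hme]
    rfl
  have himgS' : S'.image σ = S := by
    ext y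
    simp only [Finset.mem_image]
    constructor
    · rintro ⟨x, hx, rfl⟩; exact (hσ x).mpr hx
    · intro hy
      refine ⟨σ.symm y, ?_, σ.apply_symm_apply y⟩
      have := hσ (σ.symm y)
      rw [σ.apply_symm_apply] at this
      exact this.mp hy
  have hEn : ∀ (ω : ι → ℝ) (T : Finset ι), En (me.symm ω) T = En ω (T.image σ) := by
    intro ω T
    rw [En, En, Finset.sum_image (fun x _ y _ h => σ.injective h)]
    exact Finset.sum_congr rfl fun p _ => by rw [happ]
  have hpre : me.symm ⁻¹' (maxE snat S' ∩ Gset ι) = maxE snat S ∩ Gset ι := by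
    ext ω
    simp only [Set.mem_preimage, Set.mem_inter_iff]
    constructor
    · rintro ⟨h1, h2⟩
      constructor
      · intro T hT
        have := h1 (T.image σ.symm) (by
          rw [Finset.card_image_of_injective _ σ.symm.injective]; exact hT)
        rw [hEn, hEn, himgS', Finset.image_image] at this
        simpa [Finset.image_id'] using this
      · intro p q hpq
        have := h2 (σ.symm p) (σ.symm q) (fun h => hpq (σ.symm.injective h))
        rw [happ, happ, σ.apply_symm_apply, σ.apply_symm_apply] at this
        exact this
    · rintro ⟨h1, h2⟩
      constructor
      · intro T hT
        rw [hEn, hEn, himgS']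
        exact h1 (T.image σ) (by
          rw [Finset.card_image_of_injective _ σ.injective]; exact hT)
      · intro p q hpq
        rw [happ, happ]
        exact h2 (σ p) (σ q) (fun h => hpq (σ.injective h))
  rw [← hmp2.measure_preimage
    ((maxE_meas snat S').inter Gset_meas).nullMeasurableSet, hpre]

/-- A permutation carrying `S'` to `S`. -/
lemma exists_perm (S S' : Finset ι) (h : S.card = S'.card) :
    ∃ σ : Equiv.Perm ι, ∀ x, σ x ∈ S ↔ x ∈ S' := by
  classical
  have e : {x // x ∈ S'} ≃ {x // x ∈ S} := Finset.equivOfCardEq h.symm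
  refine ⟨e.extendSubtype, fun x => ?_⟩
  constructor
  · intro hx
    by_contra hx'
    exact e.extendSubtype_not_mem x hx' hx
  · intro hx
    exact e.extendSubtype_mem x hx
end MT2


section Main
variable {m n M s : ℕ}

/-- All entries in the columns from `c`. -/
def colSet (m : ℕ) {n : ℕ} (c : Finset (Fin n)) : Finset (Fin m × Fin n) :=
  Finset.univ.filter fun p => p.2 ∈ c

lemma colSet_card (c : Finset (Fin n)) : (colSet m c).card = m * c.card := by
  classical
  have : colSet m c = Finset.univ ×ˢ c := by
    ext p
    simp [colSet, Finset.mem_product]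
  rw [this, Finset.card_product, Finset.card_univ, Fintype.card_fin]

/-- The second filtered bilinear index set. -/
def csF {m n : ℕ} (S : Finset (Fin m × Fin n)) (i0 k0 : Fin m) : Finset (Fin n) :=
  Finset.univ.filter fun j => (k0, j) ∈ S ∧ (i0, j) ∉ S

noncomputable def QQ {m n : ℕ} (S : Finset (Fin m × Fin n)) (i0 k0 : Fin m) (j0 : Fin n) :
    Set ((Fin m × Fin n) → ℝ) :=
  if (k0, j0) ∈ S ∧ (i0, j0) ∉ S
  then {ω | ∑ j ∈ csF S i0 k0, ω (i0, j) * ω (k0, j) = 0}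
  else ∅

lemma QQ_null (S : Finset (Fin m × Fin n)) (i0 k0 : Fin m) (j0 : Fin n) :
    piGauss (Fin m × Fin n) (QQ S i0 k0 j0) = 0 := by
  rw [QQ]
  split_ifs with hcond
  · have hik : i0 ≠ k0 := by
      intro h; rw [h] at hcond; exact hcond.2 hcond.1
    have hj0 : j0 ∈ csF S i0 k0 := by
      simp [csF, hcond.1, hcond.2]
    exact Q_null i0 k0 hik (csF S i0 k0) j0 hj0
  · simp

lemma QQ_meas (S : Finset (Fin m × Fin n)) (i0 k0 : Fin m) (j0 : Fin n) :
    MeasurableSet (QQ S i0 k0 j0) := by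
  rw [QQ]
  split_ifs
  · exact measurableSet_eq_fun
      (Finset.measurable_sum _ fun j _ => (measurable_pi_apply (i0, j)).mul (measurable_pi_apply (k0, j)))
      measurable_const
  · exact MeasurableSet.empty

/-- The full-column event. -/
noncomputable def FullColEvt (m n s : ℕ) : Set ((Fin m × Fin n) → ℝ) :=
  ⋃ c ∈ Finset.powersetCard (s / m) (Finset.univ : Finset (Fin n)),
    (maxE s (colSet m c) ∩ Gset (Fin m × Fin n))

noncomputable def BadSet (m n s : ℕ) : Set ((Fin m × Fin n) → ℝ) :=
  (Gset (Fin m × Fin n))ᶜ ∪ (⋃ p : Fin m × Fin n, {ω | ω p = 0})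
    ∪ (⋃ (S : Finset (Fin m × Fin n)), ⋃ (i0 : Fin m), ⋃ (k0 : Fin m), ⋃ (j0 : Fin n),
        QQ S i0 k0 j0)
    ∪ (if m ∣ s then FullColEvt m n s else ∅)

lemma BadSet_meas : MeasurableSet (BadSet m n s) := by
  refine MeasurableSet.union (MeasurableSet.union (MeasurableSet.union ?_ ?_) ?_) ?_
  · exact Gset_meas.compl
  · exact MeasurableSet.iUnion fun p =>
      measurableSet_eq_fun (measurable_pi_apply p) measurable_const
  · exact MeasurableSet.iUnion fun S => MeasurableSet.iUnion fun i0 =>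
      MeasurableSet.iUnion fun k0 => MeasurableSet.iUnion fun j0 => QQ_meas S i0 k0 j0
  · split_ifs
    · exact (Finset.powersetCard (s / m) Finset.univ).measurableSet_biUnion
        fun c _ => (maxE_meas s (colSet m c)).inter Gset_meas
    · exact MeasurableSet.empty

/-- Covering: failure of strict inequality puts `ω` in the bad set. -/
lemma cover (hm : 1 < m) (hmM : m ≤ M) (hs0 : 0 < s) (hs : s < m * n)
    (Φstar : ((Fin m × Fin n) → ℝ) → Matrix (Fin m) (Fin n) ℝ)
    (hΦcard : ∀ ω, l0 (Φstar ω) ≤ s)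
    (hΦmin : ∀ ω (Φ : Matrix (Fin m) (Fin n) ℝ), l0 Φ ≤ s →
      frobNorm (U0 m n ω - Φstar ω) ≤ frobNorm (U0 m n ω - Φ))
    (ω : (Fin m × Fin n) → ℝ)
    (hni : ¬ sInf (ESet M Φstar ω) < frobNorm (U0 m n ω - Φstar ω)) :
    ω ∈ BadSet m n s := by
  classical
  set S := suppS Φstar ω with hSdef
  have hcard : S.card ≤ s := hΦcard ω
  rcases lt_or_eq_of_le hcard with hlt | heq
  · -- some coordinate vanishes
    have hSne : S ≠ Finset.univ := by
      intro h
      rw [h, Finset.card_univ, Fintype.card_prod, Fintype.card_fin, Fintype.card_fin] at hlt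
      omega
    obtain ⟨p, hp⟩ : ∃ p, p ∉ S := by
      by_contra h; push_neg at h
      exact hSne (Finset.eq_univ_iff_forall.mpr h)
    have hins := energy_max Φstar hΦcard hΦmin ω (insert p S)
      (by rw [Finset.card_insert_of_notMem hp]; omega)
    rw [Finset.sum_insert hp] at hins
    have hp2 : ω p ^ 2 ≤ 0 := by
      have : ∑ q ∈ S, ω q ^ 2 ≤ ∑ q ∈ suppS Φstar ω, ω q ^ 2 := le_of_eq (by rw [hSdef])
      rw [← hSdef] at hins
      linarith
    have hp0 : ω p = 0 := by
      have := sq_nonneg (ω p)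
      have h0 : ω p ^ 2 = 0 := le_antisymm hp2 (sq_nonneg _)
      exact pow_eq_zero_iff two_ne_zero |>.mp h0
    exact Set.mem_union_left _ (Set.mem_union_left _ (Set.mem_union_right _ (Set.mem_iUnion.mpr ⟨p, hp0⟩)))
  · -- |S| = s
    by_cases hG : ω ∈ Gset (Fin m × Fin n)
    · by_cases hfc : ∀ (k : Fin m) (j : Fin n), (k, j) ∈ S → ∀ i : Fin m, (i, j) ∈ S
      · -- full columns
        set c : Finset (Fin n) := Finset.univ.filter (fun j => ∃ k, (k, j) ∈ S) with hc
        have hSc : S = colSet m c := by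
          ext p
          simp only [colSet, Finset.mem_filter, Finset.mem_univ, true_and, hc]
          constructor
          · intro hpS
            exact ⟨p.1, by rwa [Prod.mk.eta]⟩
          · rintro ⟨k, hk⟩
            have := hfc k p.2 hk p.1
            rwa [Prod.mk.eta] at this
        have hcards : s = m * c.card := by rw [← heq, hSc, colSet_card]
        have hdvd : m ∣ s := ⟨c.card, hcards⟩
        have hccard : c.card = s / m := by rw [hcards, Nat.mul_div_cancel_left _ (by omega)]
        refine Set.mem_union_right _ ?_
        rw [if_pos hdvd]
        have hcmem : c ∈ Finset.powersetCard (s / m) (Finset.univ : Finset (Fin n)) :=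
          Finset.mem_powersetCard.mpr ⟨Finset.subset_univ _, hccard⟩
        refine Set.mem_iUnion₂.mpr ⟨c, hcmem, ⟨?_, hG⟩⟩
        intro T hT
        have := energy_max Φstar hΦcard hΦmin ω T hT
        rw [← hSdef, hSc] at this
        exact this
      · -- partial column: bilinear sum vanishes
        push_neg at hfc
        obtain ⟨k0, j0, hk0, i0, hi0⟩ := hfc
        have hB := key_sum Φstar hmM hΦcard hΦmin ω hni i0 k0
        have hfilter : Finset.univ.filter (fun j => Φstar ω k0 j ≠ 0 ∧ Φstar ω i0 j = 0)
            = csF S i0 k0 := by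
          apply Finset.filter_congr
          intro j _
          have h1 : ((k0, j) ∈ S) ↔ Φstar ω k0 j ≠ 0 := by simp [hSdef, suppS]
          have h2 : ((i0, j) ∉ S) ↔ Φstar ω i0 j = 0 := by simp [hSdef, suppS]
          simp [h1, h2]
        refine Set.mem_union_left _ (Set.mem_union_right _ ?_)
        refine Set.mem_iUnion.mpr ⟨S, Set.mem_iUnion.mpr ⟨i0, Set.mem_iUnion.mpr ⟨k0,
          Set.mem_iUnion.mpr ⟨j0, ?_⟩⟩⟩⟩
        rw [QQ, if_pos ⟨hk0, hi0⟩]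
        rw [← hfilter]
        exact hB
    · exact Set.mem_union_left _ (Set.mem_union_left _ (Set.mem_union_left _ hG))

lemma colSet_mem (hdvd : m ∣ s) (c : Finset (Fin n))
    (hc : c ∈ Finset.powersetCard (s / m) (Finset.univ : Finset (Fin n))) :
    colSet m c ∈ Finset.powersetCard s (Finset.univ : Finset (Fin m × Fin n)) := by
  refine Finset.mem_powersetCard.mpr ⟨Finset.subset_univ _, ?_⟩
  rw [colSet_card, (Finset.mem_powersetCard.mp hc).2, Nat.mul_div_cancel' hdvd]

lemma fullcol_bound (hdvd : m ∣ s) (hs : s < m * n) :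
    piGauss (Fin m × Fin n) (FullColEvt m n s)
      ≤ (n.choose (s / m) : ENNReal) / ((m * n).choose s : ENNReal) := by
  classical
  set ι := Fin m × Fin n
  set 𝒮 := Finset.powersetCard s (Finset.univ : Finset ι) with h𝒮
  have hcard𝒮 : 𝒮.card = (m * n).choose s := by
    rw [h𝒮, Finset.card_powersetCard, Finset.card_univ, Fintype.card_prod,
      Fintype.card_fin, Fintype.card_fin]
  have hdisj : (↑𝒮 : Set (Finset ι)).PairwiseDisjoint
      (fun S => maxE s S ∩ Gset ι) := by
    intro S hS S' hS' hne
    exact maxE_disjoint (Finset.mem_powersetCard.mp (Finset.mem_coe.mp hS)).2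
      (Finset.mem_powersetCard.mp (Finset.mem_coe.mp hS')).2 hne
  have hsum : ∑ S ∈ 𝒮, piGauss ι (maxE s S ∩ Gset ι)
      = piGauss ι (⋃ S ∈ 𝒮, (maxE s S ∩ Gset ι)) :=
    (measure_biUnion_finset hdisj fun S _ => (maxE_meas s S).inter Gset_meas).symm
  have hle1 : ∑ S ∈ 𝒮, piGauss ι (maxE s S ∩ Gset ι) ≤ 1 := by
    rw [hsum]
    exact le_trans (measure_mono (Set.subset_univ _)) (le_of_eq measure_univ)
  have hterm : ∀ c ∈ Finset.powersetCard (s / m) (Finset.univ : Finset (Fin n)),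
      piGauss ι (maxE s (colSet m c) ∩ Gset ι) ≤ (((m * n).choose s : ENNReal))⁻¹ := by
    intro c hc
    set v := piGauss ι (maxE s (colSet m c) ∩ Gset ι) with hv
    have hcolmem := colSet_mem hdvd c hc
    have hcolcard : (colSet m c).card = s := (Finset.mem_powersetCard.mp hcolmem).2
    have hallEq : ∀ S ∈ 𝒮, piGauss ι (maxE s S ∩ Gset ι) = v := by
      intro S hS
      have hScard : S.card = s := (Finset.mem_powersetCard.mp hS).2
      obtain ⟨σ, hσ⟩ := exists_perm S (colSet m c) (by rw [hScard, hcolcard])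
      exact (maxE_perm s S (colSet m c) σ hσ).symm
    have hconst : ∑ S ∈ 𝒮, piGauss ι (maxE s S ∩ Gset ι) = 𝒮.card • v := by
      rw [Finset.sum_congr rfl hallEq, Finset.sum_const]
    have hmul : ((m * n).choose s : ENNReal) * v ≤ 1 := by
      rw [← hcard𝒮]
      have : (𝒮.card : ENNReal) * v = 𝒮.card • v := (nsmul_eq_mul _ _).symm
      rw [this, ← hconst]
      exact hle1
    rw [ENNReal.le_inv_iff_mul_le, mul_comm]
    exact hmul
  calc piGauss ι (FullColEvt m n s)
      ≤ ∑ c ∈ Finset.powersetCard (s / m) (Finset.univ : Finset (Fin n)),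
        piGauss ι (maxE s (colSet m c) ∩ Gset ι) := measure_biUnion_finset_le _ _
    _ ≤ ∑ _c ∈ Finset.powersetCard (s / m) (Finset.univ : Finset (Fin n)),
        (((m * n).choose s : ENNReal))⁻¹ := Finset.sum_le_sum hterm
    _ = (n.choose (s / m) : ENNReal) / ((m * n).choose s : ENNReal) := by
        rw [Finset.sum_const, Finset.card_powersetCard, Finset.card_univ, Fintype.card_fin,
          nsmul_eq_mul, div_eq_mul_inv]

lemma BadSet_bound (hdvd? : True) (hs : s < m * n) :
    piGauss (Fin m × Fin n) (BadSet m n s)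
      ≤ (if m ∣ s then (n.choose (s / m) : ENNReal) / ((m * n).choose s : ENNReal) else 0) := by
  classical
  set ι := Fin m × Fin n
  have h1 : piGauss ι ((Gset ι)ᶜ) = 0 := Gcompl_null
  have h2 : piGauss ι (⋃ p : ι, {ω | ω p = 0}) = 0 :=
    measure_iUnion_null fun p => coord_null p 0
  have h3 : piGauss ι (⋃ (S : Finset ι), ⋃ (i0 : Fin m), ⋃ (k0 : Fin m), ⋃ (j0 : Fin n),
      QQ S i0 k0 j0) = 0 :=
    measure_iUnion_null fun S => measure_iUnion_null fun i0 => measure_iUnion_null fun k0 =>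
      measure_iUnion_null fun j0 => QQ_null S i0 k0 j0
  have hABC : piGauss ι (((Gset ι)ᶜ ∪ (⋃ p : ι, {ω | ω p = 0}))
      ∪ (⋃ (S : Finset ι), ⋃ (i0 : Fin m), ⋃ (k0 : Fin m), ⋃ (j0 : Fin n), QQ S i0 k0 j0)) = 0 :=
    measure_union_null (measure_union_null h1 h2) h3
  calc piGauss ι (BadSet m n s)
      ≤ piGauss ι (((Gset ι)ᶜ ∪ (⋃ p : ι, {ω | ω p = 0}))
          ∪ (⋃ (S : Finset ι), ⋃ (i0 : Fin m), ⋃ (k0 : Fin m), ⋃ (j0 : Fin n), QQ S i0 k0 j0))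
        + piGauss ι (if m ∣ s then FullColEvt m n s else ∅) := measure_union_le _ _
    _ = piGauss ι (if m ∣ s then FullColEvt m n s else ∅) := by rw [hABC, zero_add]
    _ ≤ (if m ∣ s then (n.choose (s / m) : ENNReal) / ((m * n).choose s : ENNReal) else 0) := by
        split_ifs with hdvd
        · exact fullcol_bound hdvd hs
        · simp
end Main


theorem stmt1 (m n M s : ℕ) (hm : 1 < m) (hmM : m ≤ M) (hs0 : 0 < s) (hs : s < m * n)
    -- `Φstar ω` is a minimizer of `‖U(ω) - Φ‖_F` over the matrices with at most `s`
    -- nonzero entries: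
    (Φstar : ((Fin m × Fin n) → ℝ) → Matrix (Fin m) (Fin n) ℝ)
    (hΦcard : ∀ ω, l0 (Φstar ω) ≤ s)
    (hΦmin : ∀ ω (Φ : Matrix (Fin m) (Fin n) ℝ), l0 Φ ≤ s →
      frobNorm (U0 m n ω - Φstar ω) ≤ frobNorm (U0 m n ω - Φ)) :
    -- ε₁ ≤ ε₂ always holds, where ε₁ is the infimum over pairs `(F, R)` with
    -- `supp R` fixed equal to `supp Φstar` (rows of index `≥ m` being zero):
    (∀ ω : (Fin m × Fin n) → ℝ,
      sInf {e : ℝ | ∃ (F : Matrix (Fin m) (Fin M) ℝ) (R : Matrix (Fin M) (Fin n) ℝ),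
          (∀ (i : Fin M) (j : Fin n), R i j ≠ 0 →
            ∃ hi : (i : ℕ) < m, Φstar ω ⟨(i : ℕ), hi⟩ j ≠ 0) ∧
          e = frobNorm (U0 m n ω - F * R)} ≤
        frobNorm (U0 m n ω - Φstar ω)) ∧
    -- and ε₁ < ε₂ holds with probability at least 1 - δ:
    (Measure.pi fun _ : Fin m × Fin n => gaussianReal 0 1)
      {ω : (Fin m × Fin n) → ℝ |
        sInf {e : ℝ | ∃ (F : Matrix (Fin m) (Fin M) ℝ) (R : Matrix (Fin M) (Fin n) ℝ),
            (∀ (i : Fin M) (j : Fin n), R i j ≠ 0 →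
              ∃ hi : (i : ℕ) < m, Φstar ω ⟨(i : ℕ), hi⟩ j ≠ 0) ∧
            e = frobNorm (U0 m n ω - F * R)} <
          frobNorm (U0 m n ω - Φstar ω)} ≥
      1 - (if m ∣ s then (n.choose (s / m) : ENNReal) / ((m * n).choose s : ENNReal) else 0) := by
  constructor
  · intro ω
    exact eps1_le Φstar hmM (by omega) ω
  · set W : Set ((Fin m × Fin n) → ℝ) := {ω : (Fin m × Fin n) → ℝ |
        sInf {e : ℝ | ∃ (F : Matrix (Fin m) (Fin M) ℝ) (R : Matrix (Fin M) (Fin n) ℝ),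
            (∀ (i : Fin M) (j : Fin n), R i j ≠ 0 →
              ∃ hi : (i : ℕ) < m, Φstar ω ⟨(i : ℕ), hi⟩ j ≠ 0) ∧
            e = frobNorm (U0 m n ω - F * R)} <
          frobNorm (U0 m n ω - Φstar ω)} with hW
    have hcover : Wᶜ ⊆ BadSet m n s := by
      intro ω hω
      exact cover hm hmM hs0 hs Φstar hΦcard hΦmin ω hω
    have hsub : (BadSet m n s)ᶜ ⊆ W := Set.compl_subset_comm.mp hcover
    have hb : piGauss (Fin m × Fin n) (BadSet m n s)
        ≤ (if m ∣ s then (n.choose (s / m) : ENNReal) / ((m * n).choose s : ENNReal) else 0) :=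
      BadSet_bound trivial hs
    show piGauss (Fin m × Fin n) W ≥ _
    calc 1 - (if m ∣ s then (n.choose (s / m) : ENNReal) / ((m * n).choose s : ENNReal) else 0)
        ≤ 1 - piGauss (Fin m × Fin n) (BadSet m n s) := tsub_le_tsub_left hb 1
      _ = piGauss (Fin m × Fin n) ((BadSet m n s)ᶜ) :=
          (prob_compl_eq_one_sub BadSet_meas).symm
      _ ≤ piGauss (Fin m × Fin n) W := measure_mono hsub
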